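/- If G is a cycle graph C_k with k ≥ 6 even, and e = uv is any edge of G, then the graph obtained from the pivot G^{uv} by deleting the vertices u and v is isomorphic to the cycle C_{k-2}. -/

import Mathlib

open SimpleGraph

variable {α β : Type*}

/-- `G` contains an induced copy of `H`. -/
def HasInducedCopy (H : SimpleGraph β) (G : SimpleGraph α) : Prop :=
  ∃ f : β ↪ α, ∀ a b, G.Adj (f a) (f b) ↔ H.Adj a b

/-- The graph `2K₂`: two disjoint edges on four vertices. -/
def twoK2Graph : SimpleGraph (Fin 4) :=
  SimpleGraph.fromEdgeSet {s(0, 1), s(2, 3)}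

/-- The domino: a 6-cycle together with a chord joining two antipodal vertices. -/
def dominoGraph : SimpleGraph (Fin 6) :=
  SimpleGraph.fromEdgeSet {s(0, 1), s(1, 2), s(2, 3), s(3, 4), s(4, 5), s(5, 0), s(0, 3)}

/-- The arrow: a 4-cycle with two pendant vertices attached to two vertices of
the same color class. -/
def arrowGraph : SimpleGraph (Fin 6) :=
  SimpleGraph.fromEdgeSet {s(0, 1), s(1, 2), s(2, 3), s(3, 0), s(0, 4), s(2, 5)}

/-- `T₂`: the subdivision of the claw `K_{1,3}` obtained by inserting one new vertex
into each edge. -/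
def t2Graph : SimpleGraph (Fin 7) :=
  SimpleGraph.fromEdgeSet {s(0, 1), s(0, 2), s(0, 3), s(1, 4), s(2, 5), s(3, 6)}

/-- `G` has a hole: an induced chordless cycle of length at least 6. -/
def HasHole (G : SimpleGraph α) : Prop :=
  ∃ n, 6 ≤ n ∧ HasInducedCopy (SimpleGraph.cycleGraph n) G

/-- Bipartite distance-hereditary graph, via the forbidden induced subgraph
characterization: connected, bipartite, with no induced hole and no induced domino. -/
def IsBDH (G : SimpleGraph α) : Prop :=
  G.Connected ∧ G.Colorable 2 ∧ ¬ HasHole G ∧ ¬ HasInducedCopy dominoGraph G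

/-- The pivot `G^{uv}` of a graph on the pair `u v`: complement all edges between
`N(u) \ {v}` and `N(v) \ {u}`. -/
def gpivot (G : SimpleGraph α) (u v : α) : SimpleGraph α where
  Adj a b := a ≠ b ∧ Xor' (G.Adj a b)
    ((G.Adj u a ∧ a ≠ v ∧ G.Adj v b ∧ b ≠ u) ∨ (G.Adj u b ∧ b ≠ v ∧ G.Adj v a ∧ a ≠ u))
  symm := ⟨by
    intro a b h
    refine ⟨h.1.symm, ?_⟩
    have hx := h.2
    rw [G.adj_comm b a, or_comm]
    exact hx⟩
  loopless := ⟨fun a h => h.1 rfl⟩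

/-- `A`, `B` are the color classes of a bipartition of `G`. -/
def IsBipartitionWith (G : SimpleGraph α) (A B : Set α) : Prop :=
  (∀ v, v ∈ A ∨ v ∈ B) ∧ (∀ v, ¬ (v ∈ A ∧ v ∈ B)) ∧
    ∀ ⦃x y⦄, G.Adj x y → (x ∈ A ∧ y ∈ B) ∨ (x ∈ B ∧ y ∈ A)

/-- The neighborhoods of any two distinct vertices of `S` are comparable under inclusion. -/
def ChainOn (G : SimpleGraph α) (S : Set α) : Prop :=
  ∀ u ∈ S, ∀ u' ∈ S, u ≠ u' →
    G.neighborSet u ⊆ G.neighborSet u' ∨ G.neighborSet u' ⊆ G.neighborSet u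

/-- An edge `uv` is bisimplicial: `N(u) ∪ N(v)` induces a complete bipartite subgraph. -/
def Bisimplicial (G : SimpleGraph α) (u v : α) : Prop :=
  G.Adj u v ∧ ∀ a b, G.Adj v a → G.Adj u b → a ≠ b → G.Adj a b

/-- A pending edge: an edge one of whose endpoints has degree one. -/
def PendingEdge (G : SimpleGraph α) (u v : α) : Prop :=
  G.Adj u v ∧ ((∃! w, G.Adj u w) ∨ (∃! w, G.Adj v w))

/-- A proper bisimplicial edge: bisimplicial and not pending. -/
def ProperBisimplicial (G : SimpleGraph α) (u v : α) : Prop :=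
  Bisimplicial G u v ∧ ¬ PendingEdge G u v

/-- `G` is distance hereditary: every connected induced subgraph inherits distances. -/
def DistHereditary (G : SimpleGraph α) : Prop :=
  ∀ U : Set α, (G.induce U).Connected →
    ∀ u v : U, (G.induce U).dist u v = G.dist (u : α) (v : α)

/-- `G` can be built by the Bandelt–Mulder construction: there is an ordering of its
vertices such that every vertex apart from the first one is, at the time of its insertion,
either a pending vertex (exactly one earlier neighbor) or a twin of an earlier vertex
(same earlier neighbors as that vertex). -/
def BMConstructible (G : SimpleGraph α) : Prop :=
  ∃ (n : ℕ) (e : Fin n ≃ α), ∀ i : Fin n, 0 < (i : ℕ) →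
    (∃! w, (∃ j : Fin n, (j : ℕ) < (i : ℕ) ∧ e j = w) ∧ G.Adj (e i) w) ∨
    (∃ j : Fin n, (j : ℕ) < (i : ℕ) ∧
      ∀ x, (∃ k : Fin n, (k : ℕ) < (i : ℕ) ∧ e k = x) → (G.Adj (e i) x ↔ G.Adj (e j) x))

/-- One pivot step: `H` is obtained from `G` by pivoting on an edge of `G`. -/
def PivotStep (G H : SimpleGraph α) : Prop := ∃ u v, G.Adj u v ∧ H = gpivot G u v

/-- `H` belongs to the pivot-orbit of `G`. -/
def InPivotOrbit (G H : SimpleGraph α) : Prop := Relation.ReflTransGen PivotStep G H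

/-- A balanced bipartite graph: every induced cycle of length at least 6 has length
divisible by 4. -/
def BalancedGraph (G : SimpleGraph α) : Prop :=
  ∀ n, 6 ≤ n → HasInducedCopy (SimpleGraph.cycleGraph n) G → n % 4 = 0

/-- `H` is a minor of `G`, via branch sets. -/
def HasMinor (G : SimpleGraph α) (H : SimpleGraph β) : Prop :=
  ∃ B : β → Set α, (∀ w, (B w).Nonempty) ∧ (∀ w, (G.induce (B w)).Connected) ∧
    (∀ w w', w ≠ w' → Disjoint (B w) (B w')) ∧
    ∀ w w', H.Adj w w' → ∃ a ∈ B w, ∃ b ∈ B w', G.Adj a b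

/-- Outer-planar graph, via the forbidden minor characterization: no `K₄` minor and
no `K_{2,3}` minor. -/
def OuterplanarGraph (G : SimpleGraph α) : Prop :=
  ¬ HasMinor G (completeGraph (Fin 4)) ∧
  ¬ HasMinor G (completeBipartiteGraph (Fin 2) (Fin 3))

/-- `G` is 2-connected: connected and still connected after deleting any one vertex. -/
def TwoConnected (G : SimpleGraph α) : Prop :=
  G.Connected ∧ ∀ v : α, ((⊤ : G.Subgraph).deleteVerts {v}).coe.Connected

/-- `G` is a path graph: a tree in which every vertex has at most two neighbors. -/
def IsPathGraph (G : SimpleGraph α) : Prop :=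
  G.IsTree ∧ ∀ v a b c : α, G.Adj v a → G.Adj v b → G.Adj v c → a = b ∨ a = c ∨ b = c

/-- An abstract plane embedding of a graph `H`: a type of faces with a distinguished
outer face, where each edge borders a pair of distinct faces, and every face is
bordered by some edge. -/
structure PlaneEmbedding (H : SimpleGraph α) where
  F : Type
  outer : F
  border : Sym2 α → Sym2 F
  border_ne : ∀ e ∈ H.edgeSet, ¬ (border e).IsDiag
  face_mem : ∀ f : F, ∃ e ∈ H.edgeSet, f ∈ border e

/-- The plane dual graph of an embedding: faces are adjacent when they share an edge. -/
def PlaneEmbedding.dualGraph {H : SimpleGraph α} (P : PlaneEmbedding H) : SimpleGraph P.F :=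
  SimpleGraph.fromEdgeSet (P.border '' H.edgeSet)

/-- The weak dual: the subgraph of the dual induced by the bounded (non-outer) faces. -/
def PlaneEmbedding.weakDual {H : SimpleGraph α} (P : PlaneEmbedding H) :=
  P.dualGraph.induce {f | f ≠ P.outer}

/-- Vertex `x` lies on face `f` of the embedding. -/
def PlaneEmbedding.OnFace {H : SimpleGraph α} (P : PlaneEmbedding H) (x : α) (f : P.F) : Prop :=
  ∃ w, H.Adj x w ∧ f ∈ P.border s(x, w)

/-- `S` is the arc set of a directed path inside the arc set `D`. -/
def IsDirectedPathSet {W : Type*} (D S : Set (W × W)) : Prop :=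
  S ⊆ D ∧ ∃ (k : ℕ) (w : Fin (k + 1) → W), Function.Injective w ∧
    S = {p | ∃ i : Fin k, p = (w i.castSucc, w i.succ)}

/-!
Rotate the cycle so that `uv` becomes its last edge `{k - 2, k - 1}`. The remaining vertices
then form the path `0, 1, …, k - 3`, and the pivot complements exactly one pair, `{k - 3, 0}`:
the two ends of that path, which are non-adjacent once `k ≥ 5`. So the pivot closes the path
into a cycle of length `k - 2`.
-/

lemma gpivot_adj {G : SimpleGraph α} {u v a b : α} :
    (gpivot G u v).Adj a b ↔ a ≠ b ∧ Xor (G.Adj a b)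
      ((G.Adj u a ∧ a ≠ v ∧ G.Adj v b ∧ b ≠ u) ∨ (G.Adj u b ∧ b ≠ v ∧ G.Adj v a ∧ a ≠ u)) :=
  Iff.rfl

lemma gpivot_comm (G : SimpleGraph α) (u v : α) : gpivot G u v = gpivot G v u := by
  ext a b
  simp only [gpivot_adj, xor_def]
  tauto

namespace SimpleGraph.Iso

variable {G : SimpleGraph α} {H : SimpleGraph β}

def gpivot (e : G ≃g H) (u v : α) : _root_.gpivot G u v ≃g _root_.gpivot H (e u) (e v) where
  toEquiv := e.toEquiv
  map_rel_iff' := by simp [gpivot_adj, e.map_adj_iff]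

def gpivotDeleteVerts (e : G ≃g H) (u v : α) :
    (_root_.gpivot G u v).induce {w | w ≠ u ∧ w ≠ v} ≃g
      (_root_.gpivot H (e u) (e v)).induce {w | w ≠ e u ∧ w ≠ e v} :=
  (e.gpivot u v).induce (Equiv.bijOn _ fun w => by simp [Iso.gpivot])

end SimpleGraph.Iso

theorem cycleGraph_adj_iff_val {n : ℕ} {a b : Fin (n + 2)} :
    (cycleGraph (n + 2)).Adj a b ↔ a.val + 1 = b.val ∨ b.val + 1 = a.val ∨
      (a.val = 0 ∧ b.val = n + 1) ∨ (a.val = n + 1 ∧ b.val = 0) := by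
  have := a.isLt; have := b.isLt
  rw [cycleGraph_adj, sub_eq_iff_eq_add', sub_eq_iff_eq_add', Fin.ext_iff, Fin.ext_iff,
    Fin.val_add_one, Fin.val_add_one]
  split_ifs with ha hb hb <;> simp only [Fin.ext_iff, Fin.val_last] at ha hb <;> omega

def cycleGraphAddRight (n : ℕ) (c : Fin (n + 2)) : cycleGraph (n + 2) ≃g cycleGraph (n + 2) where
  toEquiv := Equiv.addRight c
  map_rel_iff' := by simp [cycleGraph_adj]

theorem gpivot_cycleGraph_adj_castLE (n : ℕ) (i j : Fin (n + 3)) :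
    (gpivot (cycleGraph (n + 5)) ⟨n + 3, by omega⟩ (Fin.last (n + 4))).Adj
      (Fin.castLE (by omega) i) (Fin.castLE (by omega) j) ↔ (cycleGraph (n + 3)).Adj i j := by
  have := i.isLt; have := j.isLt
  simp only [gpivot_adj, xor_def, cycleGraph_adj_iff_val, ne_eq, Fin.ext_iff, Fin.val_last,
    Fin.val_castLE, true_and]
  omega

def gpivotCycleGraphIso (n : ℕ) :
    (gpivot (cycleGraph (n + 5)) ⟨n + 3, by omega⟩ (Fin.last (n + 4))).induce
      {w | w ≠ ⟨n + 3, by omega⟩ ∧ w ≠ Fin.last (n + 4)} ≃g cycleGraph (n + 3) :=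
  .symm
  { toFun i := ⟨Fin.castLE (by omega) i, by simp [Fin.ext_iff]; omega⟩
    invFun w := ⟨w.1, by have := w.2; simp [Fin.ext_iff] at this; omega⟩
    left_inv _ := rfl
    right_inv _ := rfl
    map_rel_iff' := gpivot_cycleGraph_adj_castLE n _ _ }

theorem stmt5_general (k : ℕ) (hk : 6 ≤ k) (u v : Fin k)
    (huv : (SimpleGraph.cycleGraph k).Adj u v) :
    Nonempty (((gpivot (SimpleGraph.cycleGraph k) u v).induce {w | w ≠ u ∧ w ≠ v}) ≃g
      SimpleGraph.cycleGraph (k - 2)) := by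
  obtain ⟨n, rfl⟩ : ∃ n, k = n + 5 := ⟨k - 5, by omega⟩
  wlog hv : v = u + 1 generalizing u v
  · have hu : u = v + 1 := by
      rcases huv with h | h
      · exact sub_eq_iff_eq_add.mp h |>.trans (add_comm _ _)
      · exact absurd (sub_eq_iff_eq_add.mp h |>.trans (add_comm _ _)) hv
    rw [gpivot_comm, Set.ext fun _ => and_comm]
    exact this v u huv.symm hu
  subst hv
  let e := cycleGraphAddRight (n + 3) (⟨n + 3, by omega⟩ - u)
  have heu : e u = ⟨n + 3, by omega⟩ := show u + _ = _ from add_sub_cancel u _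
  have hev : e (u + 1) = Fin.last (n + 4) :=
    calc e (u + 1) = e u + 1 := show u + 1 + _ = u + _ + 1 from add_right_comm _ _ _
      _ = Fin.last (n + 4) := by rw [heu]; ext; simp [Fin.val_add_one, Fin.ext_iff]
  have iso := e.gpivotDeleteVerts u (u + 1)
  rw [heu, hev] at iso
  exact ⟨(gpivotCycleGraphIso n).comp iso⟩

theorem stmt5 (k : ℕ) (hk : 6 ≤ k) (hke : Even k) (u v : Fin k)
    (huv : (SimpleGraph.cycleGraph k).Adj u v) :
    Nonempty (((gpivot (SimpleGraph.cycleGraph k) u v).induce {w | w ≠ u ∧ w ≠ v}) ≃g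
      SimpleGraph.cycleGraph (k - 2)) :=
  stmt5_general k hk u v huv
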